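/- arXiv:2409.03908 — 6 statements merged into one kernel-verified Lean document; each statement's English description precedes it below -/
import Mathlib

section
/- Let 0 < R₁ < R₂ be real numbers and let g : ℝ → ℝ be a nonnegative, monotone nondecreasing function such that g(r) = 0 for all r ≤ R₁ and g(r) = g(R₂) for all r ≥ R₂. Define φ : ℝ² → ℝ by φ(x) = g(‖x‖). Then for every Lebesgue-measurable set Ω ⊆ ℝ² such that the Lebesgue measure of Ω ∖ closedBall(0, R₁) equals π(R₂² − R₁²), one has ∫_{A(R₁,R₂)} φ(x)² dx ≤ ∫_Ω φ(x)² dx. -/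
/-!
Since `φ` vanishes on the closed ball of radius `R₁`, `Ω` may be replaced by
`Ω' = Ω \ closedBall 0 R₁`, which has the same area as the annulus `A`. As `g` is nondecreasing and
constant beyond `R₂`, `φ²` is at most its maximal value `g(R₂)²` on `A \ Ω'` and equal to it on
`Ω' \ A`, and these two sets have the same measure.
-/

open MeasureTheory Real Metric Set
open scoped ENNReal

section Bathtub

variable {α : Type*} [MeasurableSpace α] {μ : Measure α} {f : α → ℝ} {s t : Set α} {M : ℝ}

lemma measure_sdiff_comm_of_measure_eq (hs : MeasurableSet s) (ht : MeasurableSet t)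
    (h : μ s = μ t) (hfin : μ s ≠ ∞) : μ (s \ t) = μ (t \ s) := by
  have hinter : μ (s ∩ t) ≠ ∞ := measure_ne_top_of_subset inter_subset_left hfin
  rw [← ENNReal.add_left_inj hinter, measure_sdiff_add_inter s ht, inter_comm,
    measure_sdiff_add_inter t hs, h]

lemma setIntegral_le_setIntegral_of_measure_eq (hs : MeasurableSet s) (ht : MeasurableSet t)
    (hμ : μ s = μ t) (hfin : μ s ≠ ∞) (hfs : IntegrableOn f s μ) (hft : IntegrableOn f t μ)
    (hle : ∀ x ∈ s \ t, f x ≤ M) (hge : ∀ x ∈ t \ s, M ≤ f x) :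
    ∫ x in s, f x ∂μ ≤ ∫ x in t, f x ∂μ := by
  have hsdiff : μ (s \ t) = μ (t \ s) := measure_sdiff_comm_of_measure_eq hs ht hμ hfin
  have hfin_st : μ (s \ t) ≠ ∞ := measure_ne_top_of_subset sdiff_subset hfin
  rw [← integral_inter_add_sdiff ht hfs, ← integral_inter_add_sdiff hs hft, inter_comm t s]
  gcongr _ + ?_
  calc ∫ x in s \ t, f x ∂μ ≤ ∫ x in s \ t, M ∂μ :=
        setIntegral_mono_on (hfs.mono_set sdiff_subset) (integrableOn_const hfin_st)
          (hs.diff ht) hle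
    _ = μ.real (t \ s) • M := by rw [setIntegral_const, measureReal_def, hsdiff, measureReal_def]
    _ ≤ ∫ x in t \ s, f x ∂μ :=
        setIntegral_ge_of_const_le (ht.diff hs) (hsdiff ▸ hfin_st) hge (hft.mono_set sdiff_subset)

end Bathtub

lemma Monotone.sq_le_sq_of_eq_zero_of_const {g : ℝ → ℝ} (hg : Monotone g) {a b r : ℝ}
    (ha : g a = 0) (har : a ≤ r) (hb : ∀ r ≥ b, g r = g b) : g r ^ 2 ≤ g b ^ 2 := by
  refine pow_le_pow_left₀ (ha ▸ hg har) ?_ 2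
  rcases le_total r b with hrb | hbr
  · exact hg hrb
  · exact (hb r hbr).le

lemma setOf_lt_norm_lt_eq_ball_sdiff_closedBall {E : Type*} [SeminormedAddGroup E] (R₁ R₂ : ℝ) :
    {x : E | R₁ < ‖x‖ ∧ ‖x‖ < R₂} = ball 0 R₂ \ closedBall 0 R₁ := by
  ext x
  simp only [mem_ofPred_eq, mem_sdiff, mem_ball_zero_iff, mem_closedBall_zero_iff, not_le, and_comm]

lemma volume_ball_sdiff_closedBall_fin_two (x : EuclideanSpace ℝ (Fin 2)) {R₁ R₂ : ℝ}
    (hR₁ : 0 ≤ R₁) (hR₁₂ : R₁ < R₂) :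
    volume (ball x R₂ \ closedBall x R₁) = ENNReal.ofReal (π * (R₂ ^ 2 - R₁ ^ 2)) := by
  rw [measure_sdiff (closedBall_subset_ball hR₁₂) measurableSet_closedBall.nullMeasurableSet
      (by simp [ENNReal.mul_eq_top]),
    EuclideanSpace.volume_ball_fin_two, EuclideanSpace.volume_closedBall_fin_two,
    ← ENNReal.ofReal_pow hR₁, ← ENNReal.ofReal_pow (hR₁.trans hR₁₂.le),
    ← ENNReal.ofReal_mul (by positivity), ← ENNReal.ofReal_mul (by positivity),
    ← ENNReal.ofReal_sub _ (by positivity)]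
  ring_nf

theorem stmt_0_general
    (R₁ R₂ : ℝ) (hR₁ : 0 < R₁) (hR₁₂ : R₁ < R₂)
    (g : ℝ → ℝ) (hgmono : Monotone g)
    (hg_inner : ∀ r ≤ R₁, g r = 0)
    (hg_outer : ∀ r ≥ R₂, g r = g R₂)
    (φ : EuclideanSpace ℝ (Fin 2) → ℝ) (hφ : ∀ x, φ x = g ‖x‖)
    (Ω : Set (EuclideanSpace ℝ (Fin 2))) (hΩm : MeasurableSet Ω)
    (hΩvol : volume (Ω \ Metric.closedBall 0 R₁) = ENNReal.ofReal (π * (R₂ ^ 2 - R₁ ^ 2))) :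
    ∫ x in {x : EuclideanSpace ℝ (Fin 2) | R₁ < ‖x‖ ∧ ‖x‖ < R₂}, (φ x) ^ 2
      ≤ ∫ x in Ω, (φ x) ^ 2 := by
  simp only [hφ]
  rw [setOf_lt_norm_lt_eq_ball_sdiff_closedBall,
    setIntegral_eq_of_subset_of_forall_sdiff_eq_zero hΩm (sdiff_subset (t := closedBall 0 R₁))
      fun x ⟨hxΩ, hx⟩ ↦ by
        have hxR₁ : ‖x‖ ≤ R₁ := mem_closedBall_zero_iff.mp (by_contra fun h ↦ hx ⟨hxΩ, h⟩)
        simp [hg_inner _ hxR₁]]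
  have hvol : volume (ball (0 : EuclideanSpace ℝ (Fin 2)) R₂ \ closedBall 0 R₁) =
      volume (Ω \ closedBall 0 R₁) := by
    rw [volume_ball_sdiff_closedBall_fin_two 0 hR₁.le hR₁₂, hΩvol]
  have hfin : volume (ball (0 : EuclideanSpace ℝ (Fin 2)) R₂ \ closedBall 0 R₁) ≠ ∞ := by
    simp [hvol, hΩvol]
  have hbound (x : EuclideanSpace ℝ (Fin 2)) : g ‖x‖ ^ 2 ≤ g R₂ ^ 2 :=
    hgmono.sq_le_sq_of_eq_zero_of_const (hg_inner 0 hR₁.le) (norm_nonneg x) hg_outer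
  have hint : ∀ s, volume s ≠ ∞ → IntegrableOn (fun x : EuclideanSpace ℝ (Fin 2) ↦ g ‖x‖ ^ 2) s :=
    fun s hs ↦ .of_bound hs.lt_top
      ((hgmono.measurable.comp measurable_norm).pow_const 2).aestronglyMeasurable (g R₂ ^ 2)
      (.of_forall fun x ↦ (Real.norm_of_nonneg (sq_nonneg _)).trans_le (hbound x))
  refine setIntegral_le_setIntegral_of_measure_eq (M := g R₂ ^ 2)
    (measurableSet_ball.diff measurableSet_closedBall) (hΩm.diff measurableSet_closedBall)
    hvol hfin (hint _ hfin) (hint _ (hvol ▸ hfin)) (fun x _ ↦ hbound x) ?_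
  rintro x ⟨⟨-, hx₁⟩, hx⟩
  have hx₂ : R₂ ≤ ‖x‖ := by
    simpa [mem_closedBall_zero_iff.not.mp hx₁] using hx
  rw [hg_outer _ hx₂]

theorem stmt_0
    (R₁ R₂ : ℝ) (hR₁ : 0 < R₁) (hR₁₂ : R₁ < R₂)
    (g : ℝ → ℝ) (hg0 : ∀ r, 0 ≤ g r) (hgmono : Monotone g)
    (hg_inner : ∀ r ≤ R₁, g r = 0)
    (hg_outer : ∀ r ≥ R₂, g r = g R₂)
    (φ : EuclideanSpace ℝ (Fin 2) → ℝ) (hφ : ∀ x, φ x = g ‖x‖)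
    (Ω : Set (EuclideanSpace ℝ (Fin 2))) (hΩm : MeasurableSet Ω)
    (hΩvol : volume (Ω \ Metric.closedBall 0 R₁) = ENNReal.ofReal (π * (R₂ ^ 2 - R₁ ^ 2))) :
    ∫ x in {x : EuclideanSpace ℝ (Fin 2) | R₁ < ‖x‖ ∧ ‖x‖ < R₂}, (φ x) ^ 2
      ≤ ∫ x in Ω, (φ x) ^ 2 :=
  stmt_0_general R₁ R₂ hR₁ hR₁₂ g hgmono hg_inner hg_outer φ hφ Ω hΩm hΩvol
end

section
/- Let 0 < ε < 1 and define φ : ℝ² → ℝ by φ(x) = 1 − log(‖x‖)/log(ε). Then φ is differentiable at every point x with ε < ‖x‖ < 1, the operator norm of its derivative satisfies ‖fderiv ℝ φ x‖ = 1/(‖x‖ · |log ε|) for such x, and ∫_{A(ε,1)} ‖fderiv ℝ φ x‖² dx = 2π/log(1/ε). -/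
/-!
Wherever the norm of a real normed space is differentiable (in the plane: away from the origin),
its derivative has operator norm one, so by the chain rule `φ = 1 - log ‖x‖ / log ε` has
gradient of length `1 / (‖x‖ |log ε|)`. This is radial, and integrating in polar coordinates
over the annulus gives `2π ∫_ε^1 r (r log ε)⁻² dr = 2π / log (1 / ε)`.
-/

open MeasureTheory Real Set Metric Module

section LogNorm

variable {E : Type*} [NormedAddCommGroup E] [NormedSpace ℝ E] [Nontrivial E] {x : E}

theorem hasFDerivAt_const_sub_log_norm_div (h : DifferentiableAt ℝ (‖·‖) x) (a c : ℝ) :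
    HasFDerivAt (fun y : E => a - log ‖y‖ / c) (-(c⁻¹ * ‖x‖⁻¹) • fderiv ℝ (‖·‖) x) x := by
  have hx : x ≠ 0 := fun hx => not_differentiableAt_norm_zero E (hx ▸ h)
  have hlog := h.hasFDerivAt.log (norm_ne_zero_iff.2 hx)
  simpa only [div_eq_mul_inv, smul_smul, neg_smul, mul_comm] using (hlog.mul_const c⁻¹).const_sub a

theorem norm_fderiv_const_sub_log_norm_div (h : DifferentiableAt ℝ (‖·‖) x) (a c : ℝ) :
    ‖fderiv ℝ (fun y : E => a - log ‖y‖ / c) x‖ = 1 / (‖x‖ * |c|) := by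
  rw [(hasFDerivAt_const_sub_log_norm_div h a c).fderiv, norm_smul, norm_fderiv_norm h, mul_one,
    norm_neg, norm_mul, norm_inv, norm_inv, norm_norm, Real.norm_eq_abs, one_div, mul_inv, mul_comm]

end LogNorm

section Radial

variable {E F : Type*} [NormedAddCommGroup E] [NormedSpace ℝ E] [Nontrivial E]
  [FiniteDimensional ℝ E] [MeasurableSpace E] [BorelSpace E] (μ : Measure E) [μ.IsAddHaarMeasure]
  [NormedAddCommGroup F] [NormedSpace ℝ F]

theorem integral_annulus_fun_norm_addHaar (f : ℝ → F) {a : ℝ} (ha : 0 ≤ a) (b : ℝ) :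
    ∫ x in {x : E | a < ‖x‖ ∧ ‖x‖ < b}, f ‖x‖ ∂μ
      = finrank ℝ E • μ.real (ball 0 1) • ∫ r in Ioo a b, r ^ (finrank ℝ E - 1) • f r := by
  have hA : {x : E | a < ‖x‖ ∧ ‖x‖ < b} = (‖·‖) ⁻¹' Ioo a b := rfl
  have hIoo : Ioo a b ∩ Ioi 0 = Ioo a b :=
    inter_eq_left.2 fun r hr => ha.trans_lt hr.1
  rw [hA, ← integral_indicator (measurableSet_Ioo.preimage measurable_norm)]
  simp_rw [← Function.comp_apply (f := f), indicator_comp_right]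
  rw [integral_fun_norm_addHaar μ,
    ← indicator_smul (Ioo a b) (fun r : ℝ => r ^ (finrank ℝ E - 1)) f,
    integral_indicator measurableSet_Ioo, Measure.restrict_restrict measurableSet_Ioo, hIoo]

end Radial

theorem integral_annulus_fun_norm_plane (f : ℝ → ℝ) {a : ℝ} (ha : 0 ≤ a) (b : ℝ) :
    ∫ x in {x : EuclideanSpace ℝ (Fin 2) | a < ‖x‖ ∧ ‖x‖ < b}, f ‖x‖
      = 2 * π * ∫ r in Ioo a b, r * f r := by
  rw [integral_annulus_fun_norm_addHaar volume f ha, finrank_euclideanSpace_fin, measureReal_def,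
    EuclideanSpace.volume_ball_fin_two]
  simp [pi_nonneg, mul_assoc]

theorem stmt_1
    (ε : ℝ) (hε0 : 0 < ε) (hε1 : ε < 1)
    (φ : EuclideanSpace ℝ (Fin 2) → ℝ)
    (hφ : ∀ x, φ x = 1 - Real.log ‖x‖ / Real.log ε) :
    (∀ x : EuclideanSpace ℝ (Fin 2), ε < ‖x‖ → ‖x‖ < 1 →
        DifferentiableAt ℝ φ x ∧ ‖fderiv ℝ φ x‖ = 1 / (‖x‖ * |Real.log ε|)) ∧
    ∫ x in {x : EuclideanSpace ℝ (Fin 2) | ε < ‖x‖ ∧ ‖x‖ < 1}, ‖fderiv ℝ φ x‖ ^ 2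
      = 2 * π / Real.log (1 / ε) := by
  obtain rfl : φ = fun y => 1 - log ‖y‖ / log ε := funext hφ
  have hderiv (x : EuclideanSpace ℝ (Fin 2)) (hx : ε < ‖x‖) :
      DifferentiableAt ℝ (fun y => 1 - log ‖y‖ / log ε) x ∧
        ‖fderiv ℝ (fun y => 1 - log ‖y‖ / log ε) x‖ = 1 / (‖x‖ * |log ε|) := by
    have hnorm : DifferentiableAt ℝ (‖·‖) x :=
      differentiableAt_id.norm ℝ (norm_pos_iff.1 (hε0.trans hx))
    exact ⟨(hasFDerivAt_const_sub_log_norm_div hnorm _ _).differentiableAt,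
      norm_fderiv_const_sub_log_norm_div hnorm _ _⟩
  refine ⟨fun x hx _ => hderiv x hx, ?_⟩
  have hlog : log ε < 0 := log_neg hε0 hε1
  calc ∫ x in {x : EuclideanSpace ℝ (Fin 2) | ε < ‖x‖ ∧ ‖x‖ < 1},
        ‖fderiv ℝ (fun y => 1 - log ‖y‖ / log ε) x‖ ^ 2
      = ∫ x in {x : EuclideanSpace ℝ (Fin 2) | ε < ‖x‖ ∧ ‖x‖ < 1}, (1 / (‖x‖ * |log ε|)) ^ 2 :=
        setIntegral_congr_fun
          ((measurableSet_lt measurable_const measurable_norm).inter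
            (measurableSet_lt measurable_norm measurable_const))
          fun x hx => by rw [(hderiv x hx.1).2]
    _ = 2 * π * ∫ r in ε..1, r⁻¹ / log ε ^ 2 := by
        rw [integral_annulus_fun_norm_plane (fun r => (1 / (r * |log ε|)) ^ 2) hε0.le,
          intervalIntegral.integral_of_le hε1.le, integral_Ioc_eq_integral_Ioo]
        congr 1
        refine setIntegral_congr_fun measurableSet_Ioo fun r hr => ?_
        have hr0 : 0 < r := hε0.trans hr.1
        rw [div_pow, mul_pow, sq_abs]
        field_simp
    _ = 2 * π / log (1 / ε) := by
        rw [intervalIntegral.integral_div, integral_inv_of_pos hε0 one_pos, one_div, log_inv]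
        field_simp
end

section
/- Let 0 < R₁ ≤ e⁻²·R₂ and define φ : ℝ² → ℝ by φ(x) = log(‖x‖/R₁)/log(R₂/R₁). Then ∫_{A(R₁,R₂)} ‖fderiv ℝ φ x‖² dx ≤ (4/(R₂² · log(R₂/R₁))) · ∫_{A(R₁,R₂)} φ(x)² dx. -/
/-! With L = log (R₂ / R₁), the radial function φ = log (r / R₁) / L has |∇φ| = 1 / (L r), so in
polar coordinates its Dirichlet energy over the annulus is 2π / L, while
∫ φ² = (2π / L²) ∫_{R₁}^{R₂} r log (r / R₁)² dr is computed from an explicit antiderivative.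
The inequality then reduces to R₁ ≤ R₂ (L - 1), which holds because L ≥ 2. -/

open MeasureTheory Real Set

theorem norm_fderiv_log_norm_div_div {E : Type*} [NormedAddCommGroup E] [InnerProductSpace ℝ E]
    {r : ℝ} (hr : r ≠ 0) (L : ℝ) {x : E} (hx : x ≠ 0) :
    ‖fderiv ℝ (fun y : E => log (‖y‖ / r) / L) x‖ = (|L| * ‖x‖)⁻¹ := by
  have hnorm : DifferentiableAt ℝ (‖·‖) x := (contDiffAt_norm ℝ hx).differentiableAt one_ne_zero
  have hlog : HasFDerivAt (fun y : E => (log ‖y‖ - log r) / L)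
      ((L⁻¹ * ‖x‖⁻¹) • fderiv ℝ (‖·‖) x) x := by
    have := ((hnorm.hasFDerivAt.log (norm_ne_zero_iff.2 hx)).sub_const (log r)).const_mul L⁻¹
    simpa only [div_eq_inv_mul, smul_smul] using this
  have heq : (fun y : E => log (‖y‖ / r) / L) =ᶠ[nhds x] fun y => (log ‖y‖ - log r) / L := by
    filter_upwards [isOpen_compl_singleton.mem_nhds hx] with y hy
    rw [log_div (norm_ne_zero_iff.2 hy) hr]
  have : Nontrivial E := ⟨⟨x, 0, hx⟩⟩
  rw [(hlog.congr_of_eventuallyEq heq).fderiv, norm_smul, norm_fderiv_norm hnorm, mul_one,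
    norm_mul, norm_inv, norm_inv, Real.norm_eq_abs, norm_norm, mul_inv]

theorem setIntegral_annulus_fun_norm_addHaar {E : Type*} [NormedAddCommGroup E]
    [NormedSpace ℝ E] [FiniteDimensional ℝ E] [Nontrivial E] [MeasurableSpace E] [BorelSpace E]
    (μ : Measure E) [μ.IsAddHaarMeasure] {a b : ℝ} (ha : 0 ≤ a) (hab : a ≤ b) (f : ℝ → ℝ) :
    ∫ x in {x : E | a < ‖x‖ ∧ ‖x‖ < b}, f ‖x‖ ∂μ
      = Module.finrank ℝ E * μ.real (Metric.ball 0 1) *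
          ∫ y in a..b, y ^ (Module.finrank ℝ E - 1) * f y := by
  have hmeas : MeasurableSet ((‖·‖) ⁻¹' Ioo a b : Set E) :=
    measurableSet_Ioo.preimage continuous_norm.measurable
  rw [show {x : E | a < ‖x‖ ∧ ‖x‖ < b} = (‖·‖) ⁻¹' Ioo a b from rfl, ← integral_indicator hmeas]
  change ∫ x, (Ioo a b).indicator f ‖x‖ ∂μ = _
  have hIoo : Ioo a b ⊆ Ioi 0 := fun y hy => ha.trans_lt hy.1
  rw [integral_fun_norm_addHaar]
  simp_rw [← indicator_smul_apply (Ioo a b) (fun y : ℝ => y ^ (Module.finrank ℝ E - 1)) f,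
    smul_eq_mul, setIntegral_indicator measurableSet_Ioo, inter_eq_self_of_subset_right hIoo,
    intervalIntegral.integral_of_le hab, integral_Ioc_eq_integral_Ioo, nsmul_eq_mul,
    mul_assoc]

theorem hasDerivAt_log_div_const {a y : ℝ} (ha : a ≠ 0) (hy : y ≠ 0) :
    HasDerivAt (fun y => log (y / a)) y⁻¹ y := by
  refine (((hasDerivAt_id' y).div_const a).log (div_ne_zero hy ha)).congr_deriv ?_
  field_simp

theorem integral_mul_log_div_sq {a b : ℝ} (ha : 0 < a) (hb : 0 < b) :
    ∫ y in a..b, y * log (y / a) ^ 2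
      = b ^ 2 / 2 * log (b / a) ^ 2 - b ^ 2 / 2 * log (b / a) + b ^ 2 / 4 - a ^ 2 / 4 := by
  have hpos : ∀ y ∈ uIcc a b, 0 < y := fun y hy => (lt_min ha hb).trans_le hy.1
  have hderiv : ∀ y ∈ uIcc a b, HasDerivAt
      (fun y => y ^ 2 / 2 * log (y / a) ^ 2 - y ^ 2 / 2 * log (y / a) + y ^ 2 / 4)
      (y * log (y / a) ^ 2) y := by
    intro y hy
    have hlog := hasDerivAt_log_div_const ha.ne' (hpos y hy).ne'
    have hsq := (hasDerivAt_pow 2 y).div_const 2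
    refine (((hsq.mul (hlog.pow 2)).sub (hsq.mul hlog)).add
      ((hasDerivAt_pow 2 y).div_const 4)).congr_deriv ?_
    simp only [Pi.pow_apply]
    field_simp
    ring
  have hcont : ContinuousOn (fun y => y * log (y / a) ^ 2) (uIcc a b) :=
    continuousOn_id.mul (((continuousOn_id.div_const a).log fun y hy =>
      (div_pos (hpos y hy) ha).ne').pow 2)
  rw [intervalIntegral.integral_eq_sub_of_hasDerivAt hderiv hcont.intervalIntegrable,
    div_self ha.ne', log_one]
  ring

theorem setIntegral_annulus_fun_norm_fin_two {a b : ℝ} (ha : 0 ≤ a) (hab : a ≤ b) (f : ℝ → ℝ) :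
    ∫ x in {x : EuclideanSpace ℝ (Fin 2) | a < ‖x‖ ∧ ‖x‖ < b}, f ‖x‖
      = 2 * π * ∫ y in a..b, y * f y := by
  rw [setIntegral_annulus_fun_norm_addHaar volume ha hab, finrank_euclideanSpace_fin,
    measureReal_def, EuclideanSpace.volume_ball_fin_two]
  simp [pi_pos.le]

theorem setIntegral_annulus_norm_fderiv_log_norm_div_sq {a b : ℝ} (ha : 0 < a) (hab : a ≤ b)
    {r : ℝ} (hr : r ≠ 0) (L : ℝ) :
    ∫ x in {x : EuclideanSpace ℝ (Fin 2) | a < ‖x‖ ∧ ‖x‖ < b},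
        ‖fderiv ℝ (fun y => log (‖y‖ / r) / L) x‖ ^ 2
      = 2 * π * log (b / a) / L ^ 2 := by
  have hannulus : MeasurableSet {x : EuclideanSpace ℝ (Fin 2) | a < ‖x‖ ∧ ‖x‖ < b} :=
    measurableSet_Ioo.preimage continuous_norm.measurable
  have hgrad : EqOn
      (fun x : EuclideanSpace ℝ (Fin 2) => ‖fderiv ℝ (fun y => log (‖y‖ / r) / L) x‖ ^ 2)
      (fun x => ((|L| * ‖x‖)⁻¹) ^ 2) {x | a < ‖x‖ ∧ ‖x‖ < b} := fun x hx =>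
    congrArg (· ^ 2) (norm_fderiv_log_norm_div_div hr L (norm_pos_iff.1 (ha.trans hx.1)))
  have hintegrand : (fun y => y * ((|L| * y)⁻¹) ^ 2) = fun y => (L ^ 2)⁻¹ * y⁻¹ := by
    ext y
    rcases eq_or_ne y 0 with rfl | hy
    · simp
    · field_simp
      rw [sq_abs]
  rw [setIntegral_congr_fun hannulus hgrad,
    setIntegral_annulus_fun_norm_fin_two ha.le hab fun y => ((|L| * y)⁻¹) ^ 2, hintegrand,
    intervalIntegral.integral_const_mul, integral_inv_of_pos ha (ha.trans_le hab)]
  ring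

theorem setIntegral_annulus_log_norm_div_sq {a b : ℝ} (ha : 0 < a) (hab : a ≤ b) (L : ℝ) :
    ∫ x in {x : EuclideanSpace ℝ (Fin 2) | a < ‖x‖ ∧ ‖x‖ < b}, (log (‖x‖ / a) / L) ^ 2
      = 2 * π / L ^ 2 *
          (b ^ 2 / 2 * log (b / a) ^ 2 - b ^ 2 / 2 * log (b / a) + b ^ 2 / 4 - a ^ 2 / 4) := by
  have hintegrand :
      (fun y => y * (log (y / a) / L) ^ 2) = fun y => (L ^ 2)⁻¹ * (y * log (y / a) ^ 2) := by
    ext y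
    ring
  rw [setIntegral_annulus_fun_norm_fin_two ha.le hab fun y => (log (y / a) / L) ^ 2, hintegrand,
    intervalIntegral.integral_const_mul, integral_mul_log_div_sq ha (ha.trans_le hab)]
  ring

theorem two_le_log_div {a b : ℝ} (ha : 0 < a) (h : a ≤ exp (-2) * b) : 2 ≤ log (b / a) := by
  have hb : 0 < b := pos_of_mul_pos_right (ha.trans_le h) (exp_pos _).le
  rw [le_log_iff_exp_le (div_pos hb ha), le_div_iff₀ ha]
  calc exp 2 * a ≤ exp 2 * (exp (-2) * b) := by gcongr
    _ = b := by rw [← mul_assoc, ← exp_add]; norm_num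

theorem stmt_5
    (R₁ R₂ : ℝ) (hR₁ : 0 < R₁) (hR : R₁ ≤ Real.exp (-2) * R₂)
    (φ : EuclideanSpace ℝ (Fin 2) → ℝ)
    (hφ : ∀ x, φ x = Real.log (‖x‖ / R₁) / Real.log (R₂ / R₁)) :
    ∫ x in {x : EuclideanSpace ℝ (Fin 2) | R₁ < ‖x‖ ∧ ‖x‖ < R₂}, ‖fderiv ℝ φ x‖ ^ 2
      ≤ (4 / (R₂ ^ 2 * Real.log (R₂ / R₁))) *
        ∫ x in {x : EuclideanSpace ℝ (Fin 2) | R₁ < ‖x‖ ∧ ‖x‖ < R₂}, (φ x) ^ 2 := by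
  obtain rfl : φ = fun x => log (‖x‖ / R₁) / log (R₂ / R₁) := funext hφ
  have hR₂ : 0 < R₂ := pos_of_mul_pos_right (hR₁.trans_le hR) (exp_pos _).le
  have hR₁₂ : R₁ ≤ R₂ := hR.trans (mul_le_of_le_one_left hR₂.le (exp_le_one_iff.2 (by norm_num)))
  have hL := two_le_log_div hR₁ hR
  set L := log (R₂ / R₁)
  have hR₁_sq : R₁ ^ 2 ≤ (R₂ * (L - 1)) ^ 2 := by gcongr; nlinarith
  calc _ = 2 * π * L / L ^ 2 :=
        setIntegral_annulus_norm_fderiv_log_norm_div_sq hR₁ hR₁₂ hR₁.ne' L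
    _ = 4 / (R₂ ^ 2 * L) * (2 * π / L ^ 2 * (R₂ ^ 2 * L ^ 2 / 4)) := by
        field_simp
    _ ≤ 4 / (R₂ ^ 2 * L) * (2 * π / L ^ 2 *
          (R₂ ^ 2 / 2 * L ^ 2 - R₂ ^ 2 / 2 * L + R₂ ^ 2 / 4 - R₁ ^ 2 / 4)) := by
        gcongr
        nlinarith
    _ = _ := by rw [setIntegral_annulus_log_norm_div_sq hR₁ hR₁₂ L]
end

section
/- Let ℓ > 0 and let Ω ⊆ ℝ × (0, ℓ) be a Lebesgue-measurable set such that A := volume(Ω ∩ {(x,y) : x > 0}) satisfies 0 < A < ∞. Define ψ : ℝ → ℝ by ψ(t) = 0 for t ≤ 0, ψ(t) = sin(πℓt/(2A)) for 0 < t < A/ℓ, and ψ(t) = 1 for t ≥ A/ℓ; and define h : ℝ → ℝ by h(t) = (πℓ/(2A))·cos(πℓt/(2A)) for 0 < t < A/ℓ and h(t) = 0 otherwise. Then ∫_Ω h(x)² d(x,y) ≤ (πℓ/(2A))² · ∫_Ω ψ(x)² d(x,y). -/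
/-!
Write `c = πℓ/(2A)` and `b = A/ℓ`, so that `c b = π/2` and `Ω⁺ = Ω ∩ {x > 0}` has area `b ℓ`.
Since `cos² − sin² = cos 2c x` on `(0, b)`, pointwise
`h² = c² (ψ² + 𝟙_(0,b) (1 + cos 2c x) − 𝟙_(x > 0))`,
so after integrating over `Ω` it remains to show `∫_Ω 𝟙_(0,b) (1 + cos 2c x) ≤ |Ω⁺| = b ℓ`.
The integrand is nonnegative and `Ω ∩ {0 < x < b}` lies in the rectangle `(0, b) × (0, ℓ)`,
over which the integral is exactly `ℓ ∫₀ᵇ (1 + cos (π x / b)) dx = b ℓ`.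
-/

open MeasureTheory Real Set

theorem setIntegral_comp_fst_le_of_subset_prod {α β : Type*} [MeasurableSpace α]
    [MeasurableSpace β] {μ : Measure α} {ν : Measure β} [SFinite μ] [SFinite ν]
    {I : Set α} {J : Set β} {S : Set (α × β)} {f : α → ℝ} (hS : S ⊆ I ×ˢ J)
    (hJ : ν J ≠ ⊤) (hf : IntegrableOn f I μ) (hf0 : 0 ≤ᵐ[μ.restrict I] f) :
    ∫ p in S, f p.1 ∂μ.prod ν ≤ ν.real J * ∫ x in I, f x ∂μ := by
  have : IsFiniteMeasure (ν.restrict J) := isFiniteMeasure_restrict.mpr hJ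
  calc ∫ p in S, f p.1 ∂μ.prod ν ≤ ∫ p in I ×ˢ J, f p.1 ∂μ.prod ν := by
        refine setIntegral_mono_set ?_ ?_ hS.eventuallyLE
        · rw [IntegrableOn, ← Measure.prod_restrict]
          exact hf.comp_fst _
        · rw [← Measure.prod_restrict]
          exact Measure.quasiMeasurePreserving_fst.ae hf0
    _ = ν.real J * ∫ x in I, f x ∂μ := by
        rw [← Measure.prod_restrict, integral_fun_fst, smul_eq_mul,
          measureReal_restrict_apply_univ]

noncomputable def cosBump (b c : ℝ) : ℝ → ℝ :=
  (Ioo 0 b).indicator fun t => 1 + cos (2 * c * t)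

section cosBump

variable {b c : ℝ}

theorem integral_one_add_cos_Ioo (hb : 0 < b) (hcb : c * b = π / 2) :
    ∫ x in Ioo 0 b, (1 + cos (2 * c * x)) = b := by
  have hc : 2 * c ≠ 0 := by rintro h; nlinarith [pi_pos]
  rw [← integral_Ioc_eq_integral_Ioo, ← intervalIntegral.integral_of_le hb.le,
    intervalIntegral.integral_add intervalIntegrable_const
      ((by fun_prop : Continuous fun x => cos (2 * c * x)).intervalIntegrable _ _),
    intervalIntegral.integral_comp_mul_left (fun x => cos x) hc, integral_cos]
  simp [show 2 * c * b = π by linarith]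

theorem setIntegral_cosBump_le {Ω : Set (ℝ × ℝ)} {ℓ : ℝ} (hb : 0 < b) (hcb : c * b = π / 2)
    (hℓ : 0 ≤ ℓ) (hΩsub : Ω ⊆ univ ×ˢ Ioo 0 ℓ) :
    ∫ p in Ω, cosBump b c p.1 ≤ b * ℓ := by
  have hsub : Ω ∩ Prod.fst ⁻¹' Ioo 0 b ⊆ Ioo 0 b ×ˢ Ioo 0 ℓ :=
    fun p hp => ⟨hp.2, (hΩsub hp.1).2⟩
  have hint : IntegrableOn (fun x => 1 + cos (2 * c * x)) (Ioo 0 b) :=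
    (by fun_prop : Continuous fun x => 1 + cos (2 * c * x)).integrableOn_Icc.mono_set
      Ioo_subset_Icc_self
  calc ∫ p in Ω, cosBump b c p.1
        = ∫ p in Ω ∩ Prod.fst ⁻¹' Ioo 0 b, (1 + cos (2 * c * p.1)) := by
        simp_rw [cosBump, ← indicator_comp_right]
        exact setIntegral_indicator (measurable_fst measurableSet_Ioo)
    _ ≤ volume.real (Ioo 0 ℓ) * ∫ x in Ioo 0 b, (1 + cos (2 * c * x)) := by
        rw [Measure.volume_eq_prod]
        exact setIntegral_comp_fst_le_of_subset_prod hsub measure_Ioo_lt_top.ne hint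
          (ae_of_all _ fun x => show (0 : ℝ) ≤ 1 + cos (2 * c * x) by
            linarith [neg_one_le_cos (2 * c * x)])
    _ = b * ℓ := by rw [volume_real_Ioo_of_le hℓ, integral_one_add_cos_Ioo hb hcb]; ring

theorem measurable_cosBump : Measurable (cosBump b c) :=
  (by fun_prop : Measurable fun t => 1 + cos (2 * c * t)).indicator measurableSet_Ioo

theorem norm_cosBump_le (t : ℝ) : ‖cosBump b c t‖ ≤ 2 :=
  (norm_indicator_le_norm_self _ _).trans <| by
    rw [norm_eq_abs, abs_le]
    constructor <;> linarith [neg_one_le_cos (2 * c * t), cos_le_one (2 * c * t)]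

theorem cosBump_of_nonpos {t : ℝ} (ht : t ≤ 0) : cosBump b c t = 0 :=
  indicator_of_notMem (fun h => ht.not_gt h.1) _

end cosBump

section Profile

variable {b c : ℝ} {ψ h : ℝ → ℝ}

theorem eq_sin_mul_max_min (hb : 0 < b) (hcb : c * b = π / 2) (hψ0 : ∀ t ≤ 0, ψ t = 0)
    (hψ1 : ∀ t, 0 < t → t < b → ψ t = sin (c * t)) (hψ2 : ∀ t, b ≤ t → ψ t = 1) :
    ψ = fun t => sin (c * max 0 (min t b)) := by
  funext t
  rcases le_or_gt t 0 with ht0 | ht0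
  · rw [hψ0 t ht0, max_eq_left (min_le_of_left_le ht0), mul_zero, sin_zero]
  rcases lt_or_ge t b with htb | htb
  · rw [hψ1 t ht0 htb, min_eq_left htb.le, max_eq_right ht0.le]
  · rw [hψ2 t htb, min_eq_right htb, max_eq_right hb.le, hcb, sin_pi_div_two]

theorem sq_eq_mul_sq_add_cosBump_sub_indicator (hψ0 : ∀ t ≤ 0, ψ t = 0)
    (hψ1 : ∀ t, 0 < t → t < b → ψ t = sin (c * t)) (hψ2 : ∀ t, b ≤ t → ψ t = 1)
    (hh1 : ∀ t, 0 < t → t < b → h t = c * cos (c * t))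
    (hh0 : ∀ t, ¬ (0 < t ∧ t < b) → h t = 0) (t : ℝ) :
    h t ^ 2 = c ^ 2 * (ψ t ^ 2 + (cosBump b c t - (Ioi 0).indicator 1 t)) := by
  rcases le_or_gt t 0 with ht0 | ht0
  · rw [hψ0 t ht0, hh0 t fun h => ht0.not_gt h.1, cosBump_of_nonpos ht0,
      indicator_of_notMem (notMem_Ioi.2 ht0)]
    ring
  rcases lt_or_ge t b with htb | htb
  · rw [hψ1 t ht0 htb, hh1 t ht0 htb, cosBump, indicator_of_mem (show t ∈ Ioo 0 b from ⟨ht0, htb⟩),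
      indicator_of_mem (mem_Ioi.2 ht0), Pi.one_apply, mul_assoc, cos_two_mul]
    linear_combination (-c ^ 2) * sin_sq_add_cos_sq (c * t)
  · rw [hψ2 t htb, hh0 t fun h => htb.not_gt h.2, cosBump,
      indicator_of_notMem fun h => htb.not_gt h.2, indicator_of_mem (mem_Ioi.2 ht0), Pi.one_apply]
    ring

end Profile

section PositivePart

variable {Ω : Set (ℝ × ℝ)}

theorem integrableOn_comp_fst_of_bounded_of_nonpos (hΩm : MeasurableSet Ω)
    (hfin : volume (Ω ∩ {p | 0 < p.1}) ≠ ⊤) {F : ℝ → ℝ} (hF : Measurable F) {C : ℝ}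
    (hC : ∀ t, ‖F t‖ ≤ C) (hF0 : ∀ t ≤ 0, F t = 0) :
    IntegrableOn (fun p => F p.1) Ω :=
  (Measure.integrableOn_of_bounded hfin (hF.comp measurable_fst).aestronglyMeasurable
    (ae_of_all _ fun p => hC p.1)).of_forall_sdiff_eq_zero hΩm
    fun _ hp => hF0 _ (not_lt.1 fun h => hp.2 ⟨hp.1, h⟩)

theorem integrableOn_indicator_Ioi_comp_fst (hΩm : MeasurableSet Ω)
    (hfin : volume (Ω ∩ {p | 0 < p.1}) ≠ ⊤) :
    IntegrableOn (fun p => (Ioi 0).indicator (1 : ℝ → ℝ) p.1) Ω :=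
  integrableOn_comp_fst_of_bounded_of_nonpos (C := 1) hΩm hfin
    (measurable_const.indicator measurableSet_Ioi)
    (fun _ => (norm_indicator_le_norm_self _ _).trans (by simp))
    (fun _ ht => indicator_of_notMem (notMem_Ioi.2 ht) _)

theorem setIntegral_indicator_Ioi_comp_fst :
    ∫ p in Ω, (Ioi 0).indicator (1 : ℝ → ℝ) p.1 = volume.real (Ω ∩ {p | 0 < p.1}) := by
  simp_rw [← indicator_comp_right]
  rw [setIntegral_indicator (measurable_fst measurableSet_Ioi)]
  simp only [Function.comp_apply, Pi.one_apply, setIntegral_const, smul_eq_mul, mul_one]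
  rfl

end PositivePart

theorem stmt_6
    (ℓ : ℝ) (hℓ : 0 < ℓ)
    (Ω : Set (ℝ × ℝ)) (hΩm : MeasurableSet Ω)
    (hΩsub : Ω ⊆ Set.univ ×ˢ Set.Ioo 0 ℓ)
    (A : ℝ) (hApos : 0 < A)
    (hA : ENNReal.ofReal A = volume (Ω ∩ {p : ℝ × ℝ | 0 < p.1}))
    (ψ h : ℝ → ℝ)
    (hψ0 : ∀ t ≤ 0, ψ t = 0)
    (hψ1 : ∀ t, 0 < t → t < A / ℓ → ψ t = Real.sin (π * ℓ * t / (2 * A)))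
    (hψ2 : ∀ t, A / ℓ ≤ t → ψ t = 1)
    (hh1 : ∀ t, 0 < t → t < A / ℓ → h t = (π * ℓ / (2 * A)) * Real.cos (π * ℓ * t / (2 * A)))
    (hh0 : ∀ t, ¬ (0 < t ∧ t < A / ℓ) → h t = 0) :
    ∫ p in Ω, (h p.1) ^ 2 ≤ (π * ℓ / (2 * A)) ^ 2 * ∫ p in Ω, (ψ p.1) ^ 2 := by
  set b := A / ℓ with hb_def
  set c := π * ℓ / (2 * A) with hc_def
  have hb : 0 < b := div_pos hApos hℓ
  have hcb : c * b = π / 2 := by rw [hb_def, hc_def]; field_simp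
  have hbℓ : b * ℓ = A := by rw [hb_def]; field_simp
  simp only [show ∀ t, π * ℓ * t / (2 * A) = c * t from fun t => by rw [hc_def]; ring] at hψ1 hh1
  have hfin : volume (Ω ∩ {p | 0 < p.1}) ≠ ⊤ := hA ▸ ENNReal.ofReal_ne_top
  have hA_real : volume.real (Ω ∩ {p | 0 < p.1}) = A := by
    rw [measureReal_def, ← hA, ENNReal.toReal_ofReal hApos.le]
  have hψ := eq_sin_mul_max_min hb hcb hψ0 hψ1 hψ2
  have hψ_int : IntegrableOn (fun p => ψ p.1 ^ 2) Ω :=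
    integrableOn_comp_fst_of_bounded_of_nonpos (F := fun t => ψ t ^ 2) (C := 1) hΩm hfin
      (by rw [hψ]; fun_prop)
      (fun t => by
        rw [hψ, norm_pow, norm_eq_abs]; exact pow_le_one₀ (abs_nonneg _) (abs_sin_le_one _))
      (fun t ht => by rw [hψ0 t ht]; ring)
  have hbump_int : IntegrableOn (fun p => cosBump b c p.1) Ω :=
    integrableOn_comp_fst_of_bounded_of_nonpos hΩm hfin measurable_cosBump norm_cosBump_le
      fun _ => cosBump_of_nonpos
  have hpos_int := integrableOn_indicator_Ioi_comp_fst hΩm hfin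
  calc ∫ p in Ω, h p.1 ^ 2
      = c ^ 2 * ((∫ p in Ω, ψ p.1 ^ 2) + ((∫ p in Ω, cosBump b c p.1) - A)) := by
        simp_rw [sq_eq_mul_sq_add_cosBump_sub_indicator hψ0 hψ1 hψ2 hh1 hh0]
        rw [integral_const_mul, integral_add hψ_int (hbump_int.sub' hpos_int),
          integral_sub hbump_int hpos_int, setIntegral_indicator_Ioi_comp_fst, hA_real]
    _ ≤ c ^ 2 * ∫ p in Ω, ψ p.1 ^ 2 := by
        have hbump := setIntegral_cosBump_le hb hcb hℓ.le hΩsub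
        exact mul_le_mul_of_nonneg_left (by linarith) (sq_nonneg c)
end

section
/- Let 0 < R₁ < R₂ and let φ : ℝ² → ℝ be continuously differentiable with φ(x) = 0 for every x with ‖x‖ = R₁. Then ∫_{A(R₁,R₂)} φ(x)² dx ≤ (R₂² · log(R₂/R₁) / 2) · ∫_{A(R₁,R₂)} ‖fderiv ℝ φ x‖² dx. -/
/-! In polar coordinates `x = r e(θ)` the annulus becomes `(R₁, R₂) × (-π, π)` with area element
`r dr dθ`, so it suffices to prove the inequality on every ray. On a ray, `φ(r e) = ∫_{R₁}^r ∂ₛφ`,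
and Cauchy–Schwarz against the weight `s` gives `φ(r e)² ≤ log(r/R₁) ∫_{R₁}^r s (∂ₛφ)² ds`.
Integrating against `r dr` over `(R₁, R₂)` contributes the factor `(R₂² - R₁²)/2 ≤ R₂²/2`, and
`|∂ₛφ| ≤ ‖Dφ‖`. -/

open MeasureTheory Real Set

lemma sq_intervalIntegral_le_log_mul {f : ℝ → ℝ} {a b : ℝ} (ha : 0 < a) (hab : a ≤ b)
    (hf : ContinuousOn f (Icc a b)) :
    (∫ s in a..b, f s) ^ 2 ≤ log (b / a) * ∫ s in a..b, s * f s ^ 2 := by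
  have hpos : ∀ s ∈ uIcc a b, 0 < s := fun s hs => ha.trans_le (by
    rw [uIcc_of_le hab] at hs; exact hs.1)
  have hcont : ∀ {h : ℝ → ℝ}, ContinuousOn h (Icc a b) → IntervalIntegrable h volume a b :=
    fun hh => ContinuousOn.intervalIntegrable (by rwa [uIcc_of_le hab])
  have hinv : IntervalIntegrable (fun s => s⁻¹) volume a b :=
    hcont (continuousOn_inv₀.mono fun s hs => (ha.trans_le hs.1).ne')
  have hwf : IntervalIntegrable (fun s => s * f s ^ 2) volume a b :=
    hcont (continuousOn_id.mul (hf.pow 2))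
  -- Cauchy–Schwarz: the quadratic `t ↦ ∫ s⁻¹ (1 + t s f s)²` is nonnegative
  have hquad : ∀ t : ℝ, 0 ≤ (∫ s in a..b, s * f s ^ 2) * (t * t)
      + (2 * ∫ s in a..b, f s) * t + log (b / a) := by
    intro t
    have hexp : ∫ s in a..b, s⁻¹ * (1 + t * s * f s) ^ 2
        = ∫ s in a..b, (t * t * (s * f s ^ 2) + 2 * t * f s + s⁻¹) := by
      refine intervalIntegral.integral_congr fun s hs => ?_
      have := (hpos s hs).ne'
      field_simp
      ring
    have hnonneg : 0 ≤ ∫ s in a..b, s⁻¹ * (1 + t * s * f s) ^ 2 :=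
      intervalIntegral.integral_nonneg hab fun s hs =>
        mul_nonneg (inv_nonneg.2 (ha.trans_le hs.1).le) (sq_nonneg _)
    rw [hexp, intervalIntegral.integral_add ((hwf.const_mul _).add ((hcont hf).const_mul _)) hinv,
      intervalIntegral.integral_add (hwf.const_mul _) ((hcont hf).const_mul _),
      intervalIntegral.integral_const_mul, intervalIntegral.integral_const_mul,
      integral_inv_of_pos ha (ha.trans_le hab)] at hnonneg
    linarith
  have := discrim_le_zero hquad
  rw [discrim] at this
  nlinarith

section
variable {g g' : ℝ → ℝ} {a b : ℝ}

lemma sq_le_log_mul_integral_of_hasDerivAt (ha : 0 < a) (hab : a ≤ b)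
    (hg : ∀ s ∈ Icc a b, HasDerivAt g (g' s) s) (hg' : ContinuousOn g' (Icc a b))
    (hga : g a = 0) :
    g b ^ 2 ≤ log (b / a) * ∫ s in a..b, s * g' s ^ 2 := by
  rw [← sub_zero (g b), ← hga, ← intervalIntegral.integral_eq_sub_of_hasDerivAt
    (by rwa [uIcc_of_le hab]) (hg'.intervalIntegrable_of_Icc hab)]
  exact sq_intervalIntegral_le_log_mul ha hab hg'

lemma intervalIntegral_mul_sq_le_of_hasDerivAt (ha : 0 < a) (hab : a ≤ b)
    (hg : ∀ s ∈ Icc a b, HasDerivAt g (g' s) s) (hg' : ContinuousOn g' (Icc a b))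
    (hga : g a = 0) :
    ∫ r in a..b, r * g r ^ 2 ≤ b ^ 2 * log (b / a) / 2 * ∫ s in a..b, s * g' s ^ 2 := by
  set B := ∫ s in a..b, s * g' s ^ 2
  have hwg' : ∀ {c}, a ≤ c → c ≤ b → IntervalIntegrable (fun s => s * g' s ^ 2) volume a c :=
    fun hac hcb => (continuousOn_id.mul ((hg'.mono (Icc_subset_Icc_right hcb)).pow 2))
      |>.intervalIntegrable_of_Icc hac
  have hB : 0 ≤ B := intervalIntegral.integral_nonneg hab fun s hs =>
    mul_nonneg (ha.trans_le hs.1).le (sq_nonneg _)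
  have hlog : 0 ≤ log (b / a) := log_nonneg ((one_le_div ha).2 hab)
  have hpointwise : ∀ r ∈ Icc a b, r * g r ^ 2 ≤ r * (log (b / a) * B) := by
    intro r hr
    have hr0 : 0 < r := ha.trans_le hr.1
    have hsub : Icc a r ⊆ Icc a b := Icc_subset_Icc_right hr.2
    refine mul_le_mul_of_nonneg_left ?_ hr0.le
    calc g r ^ 2 ≤ log (r / a) * ∫ s in a..r, s * g' s ^ 2 :=
          sq_le_log_mul_integral_of_hasDerivAt ha hr.1 (fun s hs => hg s (hsub hs))
            (hg'.mono hsub) hga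
      _ ≤ log (b / a) * B :=
          mul_le_mul (log_le_log (div_pos hr0 ha) (div_le_div_of_nonneg_right hr.2 ha.le))
            (intervalIntegral.integral_mono_interval le_rfl hr.1 hr.2
              ((ae_restrict_iff' measurableSet_Ioc).2 (Filter.Eventually.of_forall
                fun s hs => mul_nonneg (ha.trans hs.1).le (sq_nonneg _))) (hwg' hab le_rfl))
            (intervalIntegral.integral_nonneg hr.1 fun s hs =>
              mul_nonneg (ha.trans_le hs.1).le (sq_nonneg _)) hlog
  have hgcont : ContinuousOn g (Icc a b) := fun s hs => (hg s hs).continuousAt.continuousWithinAt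
  calc ∫ r in a..b, r * g r ^ 2 ≤ ∫ r in a..b, r * (log (b / a) * B) :=
        intervalIntegral.integral_mono_on hab
          ((continuousOn_id.mul (hgcont.pow 2)).intervalIntegrable_of_Icc hab)
          ((continuous_id.mul continuous_const).intervalIntegrable a b) hpointwise
    _ = (b ^ 2 - a ^ 2) / 2 * (log (b / a) * B) := by
        rw [intervalIntegral.integral_mul_const, integral_id]
    _ ≤ b ^ 2 * log (b / a) / 2 * B := by
        have := mul_nonneg hlog hB
        nlinarith [sq_nonneg a]

end

lemma intervalIntegral_mul_sq_comp_smul_le {E : Type*} [NormedAddCommGroup E] [NormedSpace ℝ E]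
    {φ : E → ℝ} (hφ : ContDiff ℝ 1 φ) {v : E} (hv : ‖v‖ ≤ 1) {a b : ℝ} (ha : 0 < a) (hab : a ≤ b)
    (hφa : φ (a • v) = 0) :
    ∫ r in a..b, r * φ (r • v) ^ 2
      ≤ b ^ 2 * log (b / a) / 2 * ∫ r in a..b, r * ‖fderiv ℝ φ (r • v)‖ ^ 2 := by
  have hderiv : ∀ s, HasDerivAt (fun r : ℝ => φ (r • v)) (fderiv ℝ φ (s • v) v) s := fun s => by
    have := (hφ.differentiable one_ne_zero (s • v)).hasFDerivAt.comp_hasDerivAt s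
      ((hasDerivAt_id s).smul_const v)
    rwa [one_smul] at this
  have hfderiv : Continuous (fderiv ℝ φ) := hφ.continuous_fderiv one_ne_zero
  refine (intervalIntegral_mul_sq_le_of_hasDerivAt ha hab (fun s _ => hderiv s)
    (by fun_prop) hφa).trans ?_
  gcongr
  · exact div_nonneg (mul_nonneg (sq_nonneg b) (log_nonneg ((one_le_div ha).2 hab))) zero_le_two
  refine intervalIntegral.integral_mono_on hab (Continuous.intervalIntegrable (by fun_prop) _ _)
    (Continuous.intervalIntegrable (by fun_prop) _ _) fun s hs => ?_
  have hdir : |fderiv ℝ φ (s • v) v| ≤ ‖fderiv ℝ φ (s • v)‖ :=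
    ((fderiv ℝ φ (s • v)).le_opNorm v).trans (mul_le_of_le_one_right (norm_nonneg _) hv)
  exact mul_le_mul_of_nonneg_left (sq_le_sq.2 (hdir.trans (le_abs_self _)))
    (ha.trans_le hs.1).le

local notation "ℝ²" => EuclideanSpace ℝ (Fin 2)

noncomputable def unitVec (θ : ℝ) : ℝ² :=
  Complex.orthonormalBasisOneI.repr (Complex.exp (θ * Complex.I))

lemma norm_unitVec (θ : ℝ) : ‖unitVec θ‖ = 1 := by
  rw [unitVec, LinearIsometryEquiv.norm_map, Complex.norm_exp_ofReal_mul_I]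

@[fun_prop]
lemma continuous_unitVec : Continuous unitVec := by
  unfold unitVec; fun_prop

lemma orthonormalBasisOneI_repr_polarCoord_symm (p : ℝ × ℝ) :
    Complex.orthonormalBasisOneI.repr (Complex.polarCoord.symm p) = p.1 • unitVec p.2 := by
  rw [unitVec, ← map_smul, Complex.polarCoord_symm_apply, Complex.real_smul,
    Complex.exp_mul_I, Complex.ofReal_cos, Complex.ofReal_sin]

lemma integral_eq_integral_polarCoord {E : Type*} [NormedAddCommGroup E] [NormedSpace ℝ E]
    (f : ℝ² → E) :
    ∫ x, f x = ∫ p in polarCoord.target, p.1 • f (p.1 • unitVec p.2) := by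
  have := (Complex.orthonormalBasisOneI.repr.measurePreserving).integral_comp
    Complex.orthonormalBasisOneI.repr.toHomeomorph.measurableEmbedding f
  rw [← this, ← Complex.integral_comp_polarCoord_symm]
  simp only [orthonormalBasisOneI_repr_polarCoord_symm]

lemma setIntegral_annulus_eq {R₁ R₂ : ℝ} (hR₁ : 0 ≤ R₁) (hR₁₂ : R₁ ≤ R₂) {f : ℝ² → ℝ}
    (hf : Continuous f) :
    ∫ x in {x : ℝ² | R₁ < ‖x‖ ∧ ‖x‖ < R₂}, f x
      = ∫ θ in -π..π, ∫ r in R₁..R₂, r * f (r • unitVec θ) := by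
  set F : ℝ × ℝ → ℝ := fun p => p.1 * f (p.1 • unitVec p.2)
  have hF : Continuous F := by fun_prop
  have hmeas : MeasurableSet {x : ℝ² | R₁ < ‖x‖ ∧ ‖x‖ < R₂} :=
    (measurableSet_lt measurable_const measurable_norm).inter
      (measurableSet_lt measurable_norm measurable_const)
  have hbox : ∫ p in polarCoord.target, p.1 • {x : ℝ² | R₁ < ‖x‖ ∧ ‖x‖ < R₂}.indicator f
      (p.1 • unitVec p.2) = ∫ p in Ioo R₁ R₂ ×ˢ Ioo (-π) π, F p := by
    have hsub : Ioo R₁ R₂ ×ˢ Ioo (-π) π ⊆ polarCoord.target :=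
      prod_mono (Ioo_subset_Ioi_self.trans (Ioi_subset_Ioi hR₁)) subset_rfl
    rw [← inter_eq_self_of_subset_right hsub,
      ← setIntegral_indicator (measurableSet_Ioo.prod measurableSet_Ioo)]
    refine setIntegral_congr_fun polarCoord.open_target.measurableSet fun p hp => ?_
    have hnorm : ‖p.1 • unitVec p.2‖ = p.1 := by
      rw [norm_smul, norm_unitVec, mul_one, norm_of_nonneg hp.1.le]
    by_cases hr : p.1 ∈ Ioo R₁ R₂
    · rw [indicator_of_mem (by simpa [hnorm] using hr), indicator_of_mem (mk_mem_prod hr hp.2),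
        smul_eq_mul]
    · rw [indicator_of_notMem (by simpa [hnorm] using hr),
        indicator_of_notMem fun h => hr h.1, smul_zero]
  rw [← integral_indicator hmeas, integral_eq_integral_polarCoord, hbox, Measure.volume_eq_prod,
    ← setIntegral_prod_swap, setIntegral_prod _ ?_, intervalIntegral.integral_of_le
    (by linarith [pi_pos])]
  · rw [integral_Ioc_eq_integral_Ioo]
    refine setIntegral_congr_fun measurableSet_Ioo fun θ _ => ?_
    rw [intervalIntegral.integral_of_le hR₁₂, integral_Ioc_eq_integral_Ioo]
    rfl
  · rw [← Measure.volume_eq_prod]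
    exact ((hF.comp continuous_swap).continuousOn.integrableOn_compact
      (isCompact_Icc.prod isCompact_Icc)).mono_set
      (prod_mono Ioo_subset_Icc_self Ioo_subset_Icc_self)

theorem stmt_8
    (R₁ R₂ : ℝ) (hR₁ : 0 < R₁) (hR₁₂ : R₁ < R₂)
    (φ : EuclideanSpace ℝ (Fin 2) → ℝ) (hφ : ContDiff ℝ 1 φ)
    (hφ0 : ∀ x : EuclideanSpace ℝ (Fin 2), ‖x‖ = R₁ → φ x = 0) :
    ∫ x in {x : EuclideanSpace ℝ (Fin 2) | R₁ < ‖x‖ ∧ ‖x‖ < R₂}, (φ x) ^ 2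
      ≤ (R₂ ^ 2 * Real.log (R₂ / R₁) / 2) *
        ∫ x in {x : EuclideanSpace ℝ (Fin 2) | R₁ < ‖x‖ ∧ ‖x‖ < R₂}, ‖fderiv ℝ φ x‖ ^ 2 := by
  have hφc : Continuous φ := hφ.continuous
  have hφ' : Continuous (fderiv ℝ φ) := hφ.continuous_fderiv one_ne_zero
  rw [setIntegral_annulus_eq hR₁.le hR₁₂.le (by fun_prop),
    setIntegral_annulus_eq hR₁.le hR₁₂.le (by fun_prop), ← intervalIntegral.integral_const_mul]
  refine intervalIntegral.integral_mono_on (by linarith [pi_pos])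
    (Continuous.intervalIntegrable (by fun_prop) _ _)
    (Continuous.intervalIntegrable (by fun_prop) _ _) fun θ _ => ?_
  refine intervalIntegral_mul_sq_comp_smul_le hφ (norm_unitVec θ).le hR₁ hR₁₂.le (hφ0 _ ?_)
  rw [norm_smul, norm_unitVec, mul_one, norm_of_nonneg hR₁.le]
end

section
/- Let V, d, j, R₁, R₂ be positive real numbers satisfying j² ≤ 8, d² ≥ 4V/π, R₂ ≥ √(V/π), and R₁ ≤ √(V/π) · exp(−(4π/j²)·(d²/V)). Then R₁ ≤ e⁻² · R₂ and 4/(R₂² · log(R₂/R₁)) ≤ j²/d². -/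
/-!
Write `E = (4π/j²)(d²/V)` for the exponent in the smallness hypothesis. The isodiametric bound
`πd² ≥ 4V` and `j² ≤ 8` give `E ≥ 16/j² ≥ 2`, and `√(V/π) ≤ R₂` turns the hypothesis into
`R₁ ≤ e^{-E} R₂`. This yields `R₁ ≤ e⁻² R₂` and `log (R₂/R₁) ≥ E`; since `R₂² ≥ V/π`, we get
`R₂² log (R₂/R₁) ≥ (V/π) E = 4d²/j²`, which is the second inequality.
-/

open Real

lemma two_le_four_mul_pi_div_sq_mul_div {V d j : ℝ} (hV : 0 < V) (hj : j ≠ 0)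
    (hj2 : j ^ 2 ≤ 8) (hd2 : 4 * V / π ≤ d ^ 2) :
    2 ≤ 4 * π / j ^ 2 * (d ^ 2 / V) := by
  have hVd : 4 * V ≤ d ^ 2 * π := (div_le_iff₀ pi_pos).1 hd2
  rw [div_mul_div_comm, le_div_iff₀ (by positivity)]
  nlinarith

lemma le_log_div_of_le_exp_neg_mul {E R₁ R₂ : ℝ} (hR₁ : 0 < R₁) (h : R₁ ≤ exp (-E) * R₂) :
    E ≤ log (R₂ / R₁) := by
  have hexp : exp E ≤ R₂ / R₁ := by
    rw [le_div_iff₀ hR₁]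
    calc exp E * R₁ ≤ exp E * (exp (-E) * R₂) := by gcongr
      _ = R₂ := by rw [← mul_assoc, ← exp_add, add_neg_cancel, exp_zero, one_mul]
  exact (le_log_iff_exp_le ((exp_pos E).trans_le hexp)).2 hexp

theorem stmt_9_general
    (V d j R₁ R₂ : ℝ)
    (hV : 0 < V) (hd : 0 < d) (hj : 0 < j) (hR₁ : 0 < R₁)
    (hj2 : j ^ 2 ≤ 8)
    (hd2 : d ^ 2 ≥ 4 * V / π)
    (hR₂' : R₂ ≥ Real.sqrt (V / π))
    (hR₁' : R₁ ≤ Real.sqrt (V / π) * Real.exp (-(4 * π / j ^ 2) * (d ^ 2 / V))) :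
    R₁ ≤ Real.exp (-2) * R₂ ∧ 4 / (R₂ ^ 2 * Real.log (R₂ / R₁)) ≤ j ^ 2 / d ^ 2 := by
  set E := 4 * π / j ^ 2 * (d ^ 2 / V) with hE_def
  have hE : 2 ≤ E := two_le_four_mul_pi_div_sq_mul_div hV hj.ne' hj2 hd2
  obtain ⟨hR₂, hR₂sq⟩ : 0 ≤ R₂ ∧ V / π ≤ R₂ ^ 2 := sqrt_le_iff.1 hR₂'
  have hR₁E : R₁ ≤ exp (-E) * R₂ :=
    calc R₁ ≤ √(V / π) * exp (-E) := by rwa [hE_def, ← neg_mul]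
      _ ≤ exp (-E) * R₂ := by rw [mul_comm]; gcongr
  refine ⟨hR₁E.trans (by gcongr), ?_⟩
  have hlog : E ≤ log (R₂ / R₁) := le_log_div_of_le_exp_neg_mul hR₁ hR₁E
  have hX : 4 * d ^ 2 / j ^ 2 ≤ R₂ ^ 2 * log (R₂ / R₁) :=
    calc 4 * d ^ 2 / j ^ 2 = V / π * E := by rw [hE_def]; field_simp
      _ ≤ R₂ ^ 2 * log (R₂ / R₁) := by gcongr
  calc 4 / (R₂ ^ 2 * log (R₂ / R₁)) ≤ 4 / (4 * d ^ 2 / j ^ 2) := by gcongr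
    _ = j ^ 2 / d ^ 2 := by field_simp

theorem stmt_9
    (V d j R₁ R₂ : ℝ)
    (hV : 0 < V) (hd : 0 < d) (hj : 0 < j) (hR₁ : 0 < R₁) (hR₂ : 0 < R₂)
    (hj2 : j ^ 2 ≤ 8)
    (hd2 : d ^ 2 ≥ 4 * V / π)
    (hR₂' : R₂ ≥ Real.sqrt (V / π))
    (hR₁' : R₁ ≤ Real.sqrt (V / π) * Real.exp (-(4 * π / j ^ 2) * (d ^ 2 / V))) :
    R₁ ≤ Real.exp (-2) * R₂ ∧ 4 / (R₂ ^ 2 * Real.log (R₂ / R₁)) ≤ j ^ 2 / d ^ 2 :=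
  stmt_9_general V d j R₁ R₂ hV hd hj hR₁ hj2 hd2 hR₂' hR₁'
end
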